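/- Let k > 0, y₂ ≥ δ > 0 and x₂ ≥ δ. For ε ∈ (0,1), if L ≥ k + log(1/ε)/(2δ), then the tail of the Sommerfeld integral satisfies ∫_{L}^{∞} e^{−√(ξ² − k²)(x₂ + y₂)} / √(ξ² − k²) dξ ≤ C ε for a constant C depending only on k and δ (and not on ε, x₂, y₂). -/

import Mathlib

open MeasureTheory
open Real Set

/-- Sommerfeld tail truncation estimate.  Let `k > 0`, `δ > 0`, and
`x₂, y₂ ≥ δ`.  There is a constant `C` depending only on `k` and `δ` such that for
every `ε ∈ (0,1)` and every truncation point `L ≥ k + log(1/ε)/(2δ)`,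
`∫_{L}^{∞} e^{−√(ξ² − k²)(x₂ + y₂)} / √(ξ² − k²) dξ ≤ C ε`. -/
theorem sommerfeld_tail_truncation
    (k δ : ℝ) (hk : 0 < k) (hδ : 0 < δ) :
    ∃ C : ℝ, 0 < C ∧
      ∀ ε : ℝ, ε ∈ Set.Ioo (0 : ℝ) 1 →
        ∀ x₂ y₂ : ℝ, δ ≤ x₂ → δ ≤ y₂ →
          ∀ L : ℝ, k + Real.log (1 / ε) / (2 * δ) ≤ L →
            (∫ ξ in Set.Ioi L,
                Real.exp (-Real.sqrt (ξ ^ 2 - k ^ 2) * (x₂ + y₂))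
                  / Real.sqrt (ξ ^ 2 - k ^ 2)) ≤ C * ε := by
  set h : ℝ → ℝ := fun t => t ^ ((1:ℝ)/2 - 1) * Real.exp (-(2*δ * t)) with hh
  have hI : IntegrableOn h (Ioi 0) := by
    have := integrableOn_rpow_mul_exp_neg_mul_rpow (s := (1:ℝ)/2 - 1) (p := 1)
      (by norm_num) one_pos (by positivity : (0:ℝ) < 2*δ)
    simpa [hh, Real.rpow_one] using this
  have hval : ∫ t : ℝ in Ioi 0, h t = (1/(2*δ)) ^ ((1:ℝ)/2) * Real.Gamma (1/2) :=
    Real.integral_rpow_mul_exp_neg_mul_Ioi (by norm_num) (by positivity)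
  set I : ℝ := (1/(2*δ)) ^ ((1:ℝ)/2) * Real.Gamma (1/2) with hIdef
  have hIpos : 0 < I := by
    apply mul_pos
    · positivity
    · exact Real.Gamma_pos_of_pos (by norm_num)
  have hsk : 0 < Real.sqrt (2*k) := Real.sqrt_pos.2 (by positivity)
  refine ⟨I / Real.sqrt (2*k), div_pos hIpos hsk, ?_⟩
  rintro ε ⟨hε0, hε1⟩ x₂ y₂ hx hy L hL
  -- basic facts
  have hlog : 0 < Real.log (1/ε) := Real.log_pos (by rw [lt_div_iff₀ hε0]; linarith)
  have hkL : k < L := by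
    have : 0 < Real.log (1/ε) / (2*δ) := by positivity
    linarith
  -- the dominating function
  set g : ℝ → ℝ := fun ξ => (ε / Real.sqrt (2*k)) * h (ξ - L) with hg
  have hgint : IntegrableOn g (Ioi L) := by
    apply Integrable.const_mul
    have h1 : Integrable ((Ioi (0:ℝ)).indicator h) := by
      rwa [integrable_indicator_iff measurableSet_Ioi]
    have h2 := h1.comp_sub_right L
    have h3 : (fun ξ : ℝ => (Ioi (0:ℝ)).indicator h (ξ - L)) =
        (Ioi L).indicator (fun ξ => h (ξ - L)) := by
      ext ξ
      by_cases hξ : ξ ∈ Ioi L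
      · rw [Set.indicator_of_mem hξ, Set.indicator_of_mem (by simpa using sub_pos.2 (mem_Ioi.mp hξ))]
      · rw [Set.indicator_of_notMem hξ, Set.indicator_of_notMem]
        simp only [mem_Ioi, not_lt] at hξ ⊢
        linarith
    rw [h3] at h2
    exact (integrable_indicator_iff measurableSet_Ioi).1 h2
  -- pointwise bound
  have hbound : ∀ ξ ∈ Ioi L,
      Real.exp (-Real.sqrt (ξ ^ 2 - k ^ 2) * (x₂ + y₂)) / Real.sqrt (ξ ^ 2 - k ^ 2)
        ≤ g ξ := by
    intro ξ hξ
    simp only [mem_Ioi] at hξ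
    have hξk : k < ξ := lt_trans hkL hξ
    have hpos : 0 < ξ ^ 2 - k ^ 2 := by nlinarith
    set s : ℝ := Real.sqrt (ξ ^ 2 - k ^ 2) with hs
    have hspos : 0 < s := Real.sqrt_pos.2 hpos
    -- s ≥ ξ - k
    have h1 : ξ - k ≤ s := by
      rw [hs, show ξ ^ 2 - k ^ 2 = (ξ - k) * (ξ + k) by ring]
      have : ξ - k ≤ Real.sqrt ((ξ - k) * (ξ - k)) := by
        rw [Real.sqrt_mul_self (by linarith)]
      refine this.trans (Real.sqrt_le_sqrt ?_)
      nlinarith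
    -- s ≥ √(2k) * √(ξ - L)
    have h2 : Real.sqrt (2*k) * Real.sqrt (ξ - L) ≤ s := by
      rw [hs, ← Real.sqrt_mul (by positivity)]
      apply Real.sqrt_le_sqrt
      nlinarith
    -- exponent bound
    have hexp : Real.exp (-s * (x₂ + y₂)) ≤ ε * Real.exp (-(2*δ*(ξ - L))) := by
      have e1 : Real.exp (-s * (x₂ + y₂)) ≤ Real.exp (-(2*δ) * s) := by
        apply Real.exp_le_exp.2
        nlinarith
      have e2 : Real.exp (-(2*δ) * s) ≤ Real.exp (-(2*δ)*(ξ - k)) := by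
        apply Real.exp_le_exp.2
        nlinarith
      have e3 : Real.exp (-(2*δ)*(ξ - k)) = Real.exp (-(2*δ)*(L - k)) * Real.exp (-(2*δ*(ξ - L))) := by
        rw [← Real.exp_add]; ring_nf
      have e4 : Real.exp (-(2*δ)*(L - k)) ≤ ε := by
        have h5 : Real.log (1/ε) / (2*δ) ≤ L - k := by linarith
        have hlk : Real.log (1/ε) ≤ (L - k) * (2*δ) := (div_le_iff₀ (by positivity)).1 h5
        calc Real.exp (-(2*δ)*(L - k)) ≤ Real.exp (-Real.log (1/ε)) := by
              apply Real.exp_le_exp.2; linarith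
          _ = ε := by
              rw [Real.log_div one_ne_zero (ne_of_gt hε0), Real.log_one]
              simp [Real.exp_log hε0]
      calc Real.exp (-s * (x₂ + y₂)) ≤ Real.exp (-(2*δ)*(ξ - k)) := e1.trans e2
        _ = Real.exp (-(2*δ)*(L - k)) * Real.exp (-(2*δ*(ξ - L))) := e3
        _ ≤ ε * Real.exp (-(2*δ*(ξ - L))) := by
            apply mul_le_mul_of_nonneg_right e4 (Real.exp_pos _).le
    -- combine
    have hLpos : 0 < ξ - L := sub_pos.2 hξ
    have hrpow : (ξ - L) ^ ((1:ℝ)/2 - 1) = 1 / Real.sqrt (ξ - L) := by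
      rw [show (1:ℝ)/2 - 1 = -(1/2) by norm_num, Real.rpow_neg hLpos.le,
        Real.sqrt_eq_rpow]
      simp [one_div]
    have key : Real.exp (-s * (x₂ + y₂)) / s
        ≤ (ε * Real.exp (-(2*δ*(ξ - L)))) / (Real.sqrt (2*k) * Real.sqrt (ξ - L)) := by
      apply div_le_div₀ (by positivity) hexp (by positivity) h2
    refine key.trans (le_of_eq ?_)
    rw [hg, hh]
    simp only []
    rw [hrpow]
    field_simp
  -- now integrate
  have hmono : (∫ ξ in Ioi L,
      Real.exp (-Real.sqrt (ξ ^ 2 - k ^ 2) * (x₂ + y₂)) / Real.sqrt (ξ ^ 2 - k ^ 2))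
      ≤ ∫ ξ in Ioi L, g ξ := by
    apply integral_mono_of_nonneg
    · filter_upwards with ξ
      positivity
    · exact hgint
    · filter_upwards [ae_restrict_mem measurableSet_Ioi] with ξ hξ using hbound ξ hξ
  refine hmono.trans (le_of_eq ?_)
  have hshift : (∫ ξ in Ioi L, h (ξ - L)) = ∫ t in Ioi 0, h t := by
    have h3 : (Ioi L).indicator (fun ξ => h (ξ - L)) =
        (fun ξ : ℝ => (Ioi (0:ℝ)).indicator h (ξ - L)) := by
      ext ξ
      by_cases hξ : ξ ∈ Ioi L
      · rw [Set.indicator_of_mem hξ, Set.indicator_of_mem (by simpa using sub_pos.2 (mem_Ioi.mp hξ))]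
      · rw [Set.indicator_of_notMem hξ, Set.indicator_of_notMem]
        simp only [mem_Ioi, not_lt] at hξ ⊢
        linarith
    rw [← integral_indicator measurableSet_Ioi, h3,
      integral_sub_right_eq_self ((Ioi (0:ℝ)).indicator h) L,
      integral_indicator measurableSet_Ioi]
  calc (∫ ξ in Ioi L, g ξ) = (ε / Real.sqrt (2*k)) * ∫ ξ in Ioi L, h (ξ - L) := by
        rw [hg]; exact integral_const_mul _ _
    _ = (ε / Real.sqrt (2*k)) * I := by rw [hshift, hval]
    _ = I / Real.sqrt (2*k) * ε := by ring
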